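/- Let X be a regular Hausdorff space of countable spread. If X is not hereditarily Lindelöf, then X contains a subspace that is hereditarily separable and not Lindelöf (an S-space). -/

import Mathlib

open TopologicalSpace

/-- A space has *countable spread* if every subspace that is discrete in its
subspace topology is countable. -/
def CountableSpread (X : Type*) [TopologicalSpace X] : Prop :=
  ∀ D : Set X, DiscreteTopology ↥D → D.Countable

/-!
If `X` is not hereditarily Lindelöf, recursion along an open cover of a non-Lindelöf subspace
with no countable subcover gives a right-separated `ω₁`-sequence `f` (no `f a` lies in the closure
of the later points), and the range `S` of `f` is not Lindelöf. If some `T ⊆ S` were not separable,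
then no closure of a countable subset of `T` together with a countable set could exhaust `T`, so
recursion picks points of `T`, each outside the closure of the earlier ones and further along `f`.
This subsequence of `f` is separated on both sides, so its range is an uncountable discrete
subspace, contradicting countable spread.
-/

open Set Topology Ordinal

abbrev OmegaOne : Type := (ω₁ : Ordinal.{0}).ToType

theorem countable_Iio_omegaOne (a : OmegaOne) : (Iio a).Countable := by
  rw [← Cardinal.le_aleph0_iff_set_countable, ← Cardinal.lt_aleph_one_iff]
  simpa using Cardinal.mk_Iio_lt a (by simp)

theorem countable_Iic_omegaOne (a : OmegaOne) : (Iic a).Countable := by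
  rw [← Iio_insert]
  exact (countable_Iio_omegaOne a).insert a

instance : Uncountable OmegaOne := by
  rw [← Cardinal.aleph0_lt_mk_iff]
  simp

theorem exists_forall_lt_omegaOne {s : Set OmegaOne} (hs : s.Countable) :
    ∃ a, ∀ b ∈ s, b < a := by
  have hbelow : (⋃ b ∈ s, Iic b).Countable := hs.biUnion fun b _ => countable_Iic_omegaOne b
  obtain ⟨a, -, ha⟩ := not_subset.mp fun h => not_countable_univ (hbelow.mono h)
  exact ⟨a, fun b hb => not_le.mp fun hab => ha (mem_biUnion hb hab)⟩

theorem exists_seq_of_forall_countable {W α : Type*} [Preorder W] [WellFoundedLT W]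
    (hW : ∀ a : W, (Iio a).Countable) {P : Set α → α → Prop}
    (hP : ∀ s : Set α, s.Countable → ∃ x, P s x) :
    ∃ f : W → α, ∀ a, P (f '' Iio a) (f a) := by
  choose g hg using hP
  have hcount (a : W) (u : Iio a → α) : (range u).Countable :=
    have := (hW a).to_subtype
    countable_range u
  let f : W → α := WellFoundedLT.fix fun a ih => g _ (hcount a fun b => ih b b.2)
  refine ⟨f, fun a => ?_⟩
  have hfa : f a = g _ (hcount a fun b => f b) := WellFoundedLT.fix_eq _ a
  rw [hfa, image_eq_range]
  exact hg _ _

section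

variable {X : Type*} [TopologicalSpace X]

theorem separableSpace_of_subset_closure {T c : Set X}
    (hc : c.Countable) (hcT : c ⊆ T) (hTc : T ⊆ closure c) : SeparableSpace T := by
  refine ⟨⟨Subtype.val ⁻¹' c, hc.preimage Subtype.val_injective, ?_⟩⟩
  rwa [Subtype.dense_iff, image_preimage_eq_inter_range, Subtype.range_coe, inter_eq_left.mpr hcT]

theorem exists_mem_notMem_closure_of_not_separableSpace {T : Set X} (hT : ¬ SeparableSpace T)
    {c e : Set X} (hc : c.Countable) (he : e.Countable) :
    ∃ y ∈ T, y ∉ closure (c ∩ T) ∧ y ∉ e := by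
  by_contra! h
  refine hT (separableSpace_of_subset_closure ((hc.mono inter_subset_left).union
    (he.mono inter_subset_left)) (union_subset inter_subset_right inter_subset_right)
    fun y hy => ?_)
  by_cases hyc : y ∈ closure (c ∩ T)
  · exact closure_mono subset_union_left hyc
  · exact subset_closure (Or.inr ⟨h y hy hyc, hy⟩)

section Separated

variable {W : Type*} [LinearOrder W] {f : W → X}

def IsLeftSeparated (f : W → X) : Prop :=
  ∀ a, f a ∉ closure (f '' Iio a)

def IsRightSeparated (f : W → X) : Prop :=
  ∀ a, f a ∉ closure (f '' Ioi a)

theorem IsLeftSeparated.injective (hf : IsLeftSeparated f) : f.Injective := by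
  intro a b hab
  by_contra hne
  rcases lt_or_gt_of_ne hne with h | h
  · exact hf b (hab ▸ subset_closure (mem_image_of_mem f h))
  · exact hf a (hab.symm ▸ subset_closure (mem_image_of_mem f h))

theorem IsLeftSeparated.comp_strictMono {V : Type*} [LinearOrder V] (hf : IsLeftSeparated f)
    {φ : V → W} (hφ : StrictMono φ) : IsLeftSeparated (f ∘ φ) := by
  intro a ha
  refine hf (φ a) (closure_mono ?_ ha)
  rw [image_comp]
  exact image_mono (image_subset_iff.mpr fun _ hb => hφ hb)

theorem IsRightSeparated.comp_strictMono {V : Type*} [LinearOrder V] (hf : IsRightSeparated f)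
    {φ : V → W} (hφ : StrictMono φ) : IsRightSeparated (f ∘ φ) := by
  intro a ha
  refine hf (φ a) (closure_mono ?_ ha)
  rw [image_comp]
  exact image_mono (image_subset_iff.mpr fun _ hb => hφ hb)

theorem IsRightSeparated.comp_isInducing {Y : Type*} [TopologicalSpace Y]
    (hf : IsRightSeparated f) {g : X → Y} (hg : IsInducing g) : IsRightSeparated (g ∘ f) := by
  intro a ha
  rw [image_comp] at ha
  exact hf a (hg.closure_eq_preimage_closure_image _ ▸ ha)

theorem IsLeftSeparated.discreteTopology_range (hl : IsLeftSeparated f)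
    (hr : IsRightSeparated f) : DiscreteTopology (range f) := by
  refine discreteTopology_of_noAccPts ?_
  rintro _ ⟨a, rfl⟩ hacc
  rw [accPt_principal_iff_clusterPt, ← mem_closure_iff_clusterPt] at hacc
  have hsub : range f \ {f a} ⊆ f '' Iio a ∪ f '' Ioi a := by
    rintro _ ⟨⟨b, rfl⟩, hb⟩
    rcases lt_or_gt_of_ne (ne_of_apply_ne f hb) with h | h
    · exact Or.inl (mem_image_of_mem f h)
    · exact Or.inr (mem_image_of_mem f h)
  have hclosure := closure_mono hsub hacc
  rw [closure_union] at hclosure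
  rcases hclosure with h | h
  · exact hl a h
  · exact hr a h

end Separated

theorem CountableSpread.not_isLeftSeparated (hX : CountableSpread X) {f : OmegaOne → X}
    (hr : IsRightSeparated f) : ¬ IsLeftSeparated f := by
  intro hl
  have hcount := (hX _ (hl.discreteTopology_range hr)).preimage hl.injective
  rw [preimage_range, countable_univ_iff] at hcount
  exact not_countable hcount

theorem exists_isRightSeparated_of_not_lindelofSpace (hX : ¬ LindelofSpace X) :
    ∃ f : OmegaOne → X, IsRightSeparated f := by
  rw [← isLindelof_univ_iff, isLindelof_iff_countable_subcover] at hX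
  push Not at hX
  obtain ⟨ι, U, hUo, hUcov, hUnc⟩ := hX
  choose i hi using fun x => mem_iUnion.mp (hUcov (mem_univ x))
  obtain ⟨f, hf⟩ := exists_seq_of_forall_countable countable_Iio_omegaOne
    (P := fun s x => x ∉ ⋃ y ∈ s, U (i y)) fun s hs => by
      obtain ⟨x, -, hx⟩ := not_subset.mp (hUnc _ (hs.image i))
      exact ⟨x, by rwa [biUnion_image] at hx⟩
  refine ⟨f, fun a ha => ?_⟩
  obtain ⟨_, hb, b, hab, rfl⟩ :=
    mem_closure_iff.mp ha (U (i (f a))) (hUo _) (hi _)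
  exact hf b (mem_biUnion (mem_image_of_mem f hab) hb)

theorem IsRightSeparated.not_lindelofSpace_range {f : OmegaOne → X} (hf : IsRightSeparated f) :
    ¬ LindelofSpace (range f) := by
  intro hL
  obtain ⟨t, ht, hcov⟩ := (isLindelof_iff_lindelofSpace.mpr hL).elim_countable_subcover
    (fun a => (closure (f '' Ioi a))ᶜ) (fun a => isClosed_closure.isOpen_compl)
    (by rintro _ ⟨a, rfl⟩; exact mem_iUnion.mpr ⟨a, hf a⟩)
  obtain ⟨a, ha⟩ := exists_forall_lt_omegaOne ht
  obtain ⟨b, hb, hab⟩ := mem_iUnion₂.mp (hcov (mem_range_self a))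
  exact hab (subset_closure (mem_image_of_mem f (ha b hb)))

theorem CountableSpread.separableSpace_of_subset_range (hX : CountableSpread X)
    {f : OmegaOne → X} (hf : IsRightSeparated f) {T : Set X} (hT : T ⊆ range f) :
    SeparableSpace T := by
  by_contra hsep
  obtain ⟨φ, hφ⟩ := exists_seq_of_forall_countable countable_Iio_omegaOne
    (P := fun s w => f w ∈ T ∧ f w ∉ closure (f '' s ∩ T) ∧ ∀ b ∈ s, b < w)
    fun s hs => by
      obtain ⟨_, hyT, hyc, hye⟩ := exists_mem_notMem_closure_of_not_separableSpace hsep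
        (hs.image f) ((hs.biUnion fun b _ => countable_Iic_omegaOne b).image f)
      obtain ⟨w, rfl⟩ := hT hyT
      exact ⟨w, hyT, hyc, fun b hb => not_le.mp fun hwb =>
        hye (mem_image_of_mem f (mem_biUnion hb hwb))⟩
  have hφ_mono : StrictMono φ := fun a b hab => (hφ b).2.2 _ (mem_image_of_mem φ hab)
  have hφ_left : IsLeftSeparated (f ∘ φ) := by
    intro a ha
    have hsubT : f '' (φ '' Iio a) ⊆ T := by
      rintro _ ⟨_, ⟨b, -, rfl⟩, rfl⟩
      exact (hφ b).1
    rw [image_comp, ← inter_eq_left.mpr hsubT] at ha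
    exact (hφ a).2.1 ha
  exact hX.not_isLeftSeparated (hf.comp_strictMono hφ_mono) hφ_left

end

theorem countable_spread_not_hereditarily_lindelof_gives_Sspace_general
    {X : Type*} [TopologicalSpace X]
    (hs : CountableSpread X)
    (hnl : ¬ HereditarilyLindelofSpace X) :
    ∃ S : Set X, (∀ T : Set ↥S, SeparableSpace ↥T) ∧ ¬ LindelofSpace ↥S := by
  obtain ⟨A, hA⟩ : ∃ A : Set X, ¬ LindelofSpace A := by
    contrapose! hnl
    exact ⟨fun A _ => isLindelof_iff_lindelofSpace.mpr (hnl A)⟩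
  obtain ⟨f, hf⟩ := exists_isRightSeparated_of_not_lindelofSpace hA
  have hfX := hf.comp_isInducing IsInducing.subtypeVal
  refine ⟨range (Subtype.val ∘ f), fun T => ?_, hfX.not_lindelofSpace_range⟩
  have hT : IsEmbedding (Subtype.val ∘ Subtype.val : T → X) :=
    IsEmbedding.subtypeVal.comp IsEmbedding.subtypeVal
  have : SeparableSpace (range (Subtype.val ∘ Subtype.val : T → X)) :=
    hs.separableSpace_of_subset_range hfX
      ((range_comp_subset_range _ _).trans Subtype.range_coe.subset)
  exact hT.toHomeomorph.symm.surjective.denseRange.separableSpace hT.toHomeomorph.symm.continuous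

theorem countable_spread_not_hereditarily_lindelof_gives_Sspace
    {X : Type*} [TopologicalSpace X] [T2Space X] [RegularSpace X]
    (hs : CountableSpread X)
    (hnl : ¬ HereditarilyLindelofSpace X) :
    ∃ S : Set X, (∀ T : Set ↥S, SeparableSpace ↥T) ∧ ¬ LindelofSpace ↥S :=
  countable_spread_not_hereditarily_lindelof_gives_Sspace_general hs hnl
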